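/- arXiv:2504.00397 — 4 statements merged into one kernel-verified Lean document; each statement's English description precedes it below -/
import Mathlib

section
/- Fix dimensions n, N, p, m₁, m₂ ≥ 1 and a point x ∈ ℝⁿ. Let ỹ : ℝⁿ → ℝᴺ and V : ℝⁿ → ℝ be differentiable at x and h₀ : ℝᴺ → ℝ be differentiable at ỹ(x). Let f ∈ ℝⁿ, g₁ ∈ ℝ^{n×m₁}, g₂ ∈ ℝ^{n×m₂}, A ∈ ℝ^{N×N}, B ∈ ℝ^{N×p}, a ∈ ℝᵖ, k̂ ∈ ℝᵖ, and G ∈ ℝ^{p×m₁} with GᵀG invertible; set G† := (GᵀG)⁻¹Gᵀ, k₁ := G†(k̂ − a), and e := a + G k₁ − k̂ ∈ ℝᵖ. Let γ, ε, β, λ, μ > 0 satisfy λ ≥ γ + εμ/(4β). Assume: (i) for all u₁ ∈ ℝ^{m₁} and u₂ ∈ ℝ^{m₂}, Dỹ(x)(f + g₁u₁ + g₂u₂) = A·ỹ(x) + B·(a + G u₁); (ii) Dh₀(ỹ(x))(A·ỹ(x) + B·k̂) > −γ·h₀(ỹ(x)) + (1/ε)·‖w‖², where w ∈ ℝᵖ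 is the vector whose j-th component is Dh₀(ỹ(x)) applied to the j-th column of B; (iii) V(x) ≥ β‖e‖²; (iv) there exists u₂ ∈ ℝ^{m₂} with DV(x)(f + g₁k₁ + g₂u₂) ≤ −λ·V(x). Then there exist u₁ ∈ ℝ^{m₁} and u₂ ∈ ℝ^{m₂} such that D(h₀∘ỹ)(x)(f + g₁u₁ + g₂u₂) − (1/μ)·DV(x)(f + g₁u₁ + g₂u₂) > −γ·(h₀(ỹ(x)) − V(x)/μ). -/
open Matrix

/-!
Take `u₁ = k₁` and `u₂` from (iv). By definition of `e` the output dynamics are then driven by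
`k̂ + e`, so `D(h₀ ∘ ỹ)(x)` is the left side of (ii) plus the cross term `⟪w, e⟫`. Young's
inequality bounds that term below by `-‖w‖²/ε - ε‖e‖²/4`: the first part is absorbed by the
margin in (ii), the second by `(λ - γ) V(x) / μ` through (iii) and `λ ≥ γ + εμ/(4β)`, and the
decay (iv) of `V` supplies `λ V(x) / μ`.
-/

lemma map_toLp_mulVec_eq_inner {N p : ℕ} (L : EuclideanSpace ℝ (Fin N) →L[ℝ] ℝ)
    (B : Matrix (Fin N) (Fin p) ℝ) (e : EuclideanSpace ℝ (Fin p)) :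
    L (WithLp.toLp 2 (B *ᵥ e))
      = inner ℝ (WithLp.toLp 2 fun j => L (WithLp.toLp 2 fun i => B i j)) e := by
  have hcols : WithLp.toLp 2 (B *ᵥ e) = ∑ j, e j • WithLp.toLp 2 (fun i => B i j) := by
    ext i
    simp [Matrix.mulVec, dotProduct, mul_comm]
  simp [hcols, PiLp.inner_apply]

lemma mul_le_one_div_mul_sq_add_div_four_mul_sq {ε : ℝ} (hε : 0 < ε) (a b : ℝ) :
    a * b ≤ 1 / ε * a ^ 2 + ε / 4 * b ^ 2 := by
  have hsq : ε * (1 / ε * a ^ 2 + ε / 4 * b ^ 2 - a * b) = (a - ε / 2 * b) ^ 2 := by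
    field_simp; ring
  have hgap := (mul_nonneg_iff_of_pos_left hε).mp (hsq ▸ sq_nonneg _)
  linarith

lemma div_four_mul_sq_le_of_mul_sq_le {γ ε β lam μ E V : ℝ}
    (hε : 0 < ε) (hβ : 0 < β) (hμ : 0 < μ) (hparam : lam ≥ γ + ε * μ / (4 * β))
    (hV : β * E ^ 2 ≤ V) :
    ε / 4 * E ^ 2 ≤ (lam - γ) / μ * V := by
  have hrate : ε / (4 * β) ≤ (lam - γ) / μ := by
    rw [div_le_div_iff₀ (by positivity) hμ]
    rw [ge_iff_le, ← le_sub_iff_add_le', div_le_iff₀ (by positivity)] at hparam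
    linarith
  calc ε / 4 * E ^ 2 = ε / (4 * β) * (β * E ^ 2) := by field_simp
    _ ≤ (lam - γ) / μ * V :=
      mul_le_mul hrate hV (by positivity) ((by positivity : 0 ≤ ε / (4 * β)).trans hrate)

theorem stmt_0_general (n N p m₁ m₂ : ℕ)
    (x : EuclideanSpace ℝ (Fin n))
    (ytil : EuclideanSpace ℝ (Fin n) → EuclideanSpace ℝ (Fin N))
    (V : EuclideanSpace ℝ (Fin n) → ℝ)
    (h₀ : EuclideanSpace ℝ (Fin N) → ℝ)
    (hytil : DifferentiableAt ℝ ytil x)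
    (hh₀ : DifferentiableAt ℝ h₀ (ytil x))
    (f : EuclideanSpace ℝ (Fin n))
    (g₁ : Matrix (Fin n) (Fin m₁) ℝ) (g₂ : Matrix (Fin n) (Fin m₂) ℝ)
    (A : Matrix (Fin N) (Fin N) ℝ) (B : Matrix (Fin N) (Fin p) ℝ)
    (a khat : EuclideanSpace ℝ (Fin p))
    (G : Matrix (Fin p) (Fin m₁) ℝ)
    (k₁ : Fin m₁ → ℝ)
    (e : EuclideanSpace ℝ (Fin p))
    (he : e = a + (WithLp.equiv 2 (Fin p → ℝ)).symm (G.mulVec k₁) - khat)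
    (γ ε β lam μ : ℝ)
    (hε : 0 < ε) (hβ : 0 < β) (hμ : 0 < μ)
    (hparam : lam ≥ γ + ε * μ / (4 * β))
    -- (i) linear output dynamics from the dual relative degree structure
    (hi : ∀ (u₁ : Fin m₁ → ℝ) (u₂ : Fin m₂ → ℝ),
      fderiv ℝ ytil x (f + (WithLp.equiv 2 (Fin n → ℝ)).symm (g₁.mulVec u₁)
          + (WithLp.equiv 2 (Fin n → ℝ)).symm (g₂.mulVec u₂))
        = (WithLp.equiv 2 (Fin N → ℝ)).symm
            (A.mulVec (ytil x) + B.mulVec (a + (WithLp.equiv 2 (Fin p → ℝ)).symm (G.mulVec u₁))))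
    -- the vector `w` whose j-th component is `Dh₀(ỹ(x))` of the j-th column of B
    (w : EuclideanSpace ℝ (Fin p))
    (hw : w = (WithLp.equiv 2 (Fin p → ℝ)).symm
      (fun j => fderiv ℝ h₀ (ytil x) ((WithLp.equiv 2 (Fin N → ℝ)).symm (fun i => B i j))))
    -- (ii) the ISSf-CBF condition for `k̂` on the linear output dynamics
    (hii : fderiv ℝ h₀ (ytil x)
        ((WithLp.equiv 2 (Fin N → ℝ)).symm (A.mulVec (ytil x) + B.mulVec khat))
      > -γ * h₀ (ytil x) + (1 / ε) * ‖w‖ ^ 2)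
    -- (iii) lower bound of the tracking CLF by the squared tracking error
    (hiii : V x ≥ β * ‖e‖ ^ 2)
    -- (iv) exponential decrease of the tracking CLF along the partial closed loop
    (hiv : ∃ u₂ : Fin m₂ → ℝ,
      fderiv ℝ V x (f + (WithLp.equiv 2 (Fin n → ℝ)).symm (g₁.mulVec k₁)
          + (WithLp.equiv 2 (Fin n → ℝ)).symm (g₂.mulVec u₂)) ≤ -lam * V x) :
    ∃ (u₁ : Fin m₁ → ℝ) (u₂ : Fin m₂ → ℝ),
      fderiv ℝ (h₀ ∘ ytil) x (f + (WithLp.equiv 2 (Fin n → ℝ)).symm (g₁.mulVec u₁)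
          + (WithLp.equiv 2 (Fin n → ℝ)).symm (g₂.mulVec u₂))
        - (1 / μ) * fderiv ℝ V x (f + (WithLp.equiv 2 (Fin n → ℝ)).symm (g₁.mulVec u₁)
          + (WithLp.equiv 2 (Fin n → ℝ)).symm (g₂.mulVec u₂))
        > -γ * (h₀ (ytil x) - V x / μ) := by
  obtain ⟨u₂, hu₂⟩ := hiv
  refine ⟨k₁, u₂, ?_⟩
  set v := f + (WithLp.equiv 2 (Fin n → ℝ)).symm (g₁.mulVec k₁)
      + (WithLp.equiv 2 (Fin n → ℝ)).symm (g₂.mulVec u₂)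
  set L := fderiv ℝ h₀ (ytil x)
  have hinput : a.ofLp + ((WithLp.equiv 2 (Fin p → ℝ)).symm (G.mulVec k₁)).ofLp
      = khat.ofLp + e.ofLp := by
    rw [he, WithLp.ofLp_sub, WithLp.ofLp_add]; abel
  have hout : fderiv ℝ (h₀ ∘ ytil) x v
      = L ((WithLp.equiv 2 (Fin N → ℝ)).symm (A.mulVec (ytil x) + B.mulVec khat))
        + inner ℝ w e := by
    rw [fderiv_comp x hh₀ hytil, ContinuousLinearMap.comp_apply, hi, hinput, mulVec_add,
      ← add_assoc, WithLp.equiv_symm_apply, WithLp.toLp_add, map_add,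
      map_toLp_mulVec_eq_inner, hw]
    rfl
  have hyoung : ‖w‖ * ‖e‖ ≤ 1 / ε * ‖w‖ ^ 2 + ε / 4 * ‖e‖ ^ 2 :=
    mul_le_one_div_mul_sq_add_div_four_mul_sq hε _ _
  have htrack := div_four_mul_sq_le_of_mul_sq_le hε hβ hμ hparam hiii
  have hdecay := mul_le_mul_of_nonneg_left hu₂ (by positivity : 0 ≤ 1 / μ)
  have hcross : -(‖w‖ * ‖e‖) ≤ inner ℝ w e := neg_le_of_abs_le (abs_real_inner_le_norm w e)
  rw [hout]
  linear_combination hii + hcross + hyoung + htrack + hdecay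

/-- pointwise form of Theorem 1: the dual-relative-degree CBF
`h(x) = h₀(ỹ(x)) − V(x)/μ` satisfies the CBF inequality at `x`. -/
theorem stmt_0 (n N p m₁ m₂ : ℕ)
    (hn : 1 ≤ n) (hN : 1 ≤ N) (hp : 1 ≤ p) (hm₁ : 1 ≤ m₁) (hm₂ : 1 ≤ m₂)
    (x : EuclideanSpace ℝ (Fin n))
    (ytil : EuclideanSpace ℝ (Fin n) → EuclideanSpace ℝ (Fin N))
    (V : EuclideanSpace ℝ (Fin n) → ℝ)
    (h₀ : EuclideanSpace ℝ (Fin N) → ℝ)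
    (hytil : DifferentiableAt ℝ ytil x) (hVd : DifferentiableAt ℝ V x)
    (hh₀ : DifferentiableAt ℝ h₀ (ytil x))
    (f : EuclideanSpace ℝ (Fin n))
    (g₁ : Matrix (Fin n) (Fin m₁) ℝ) (g₂ : Matrix (Fin n) (Fin m₂) ℝ)
    (A : Matrix (Fin N) (Fin N) ℝ) (B : Matrix (Fin N) (Fin p) ℝ)
    (a khat : EuclideanSpace ℝ (Fin p))
    (G : Matrix (Fin p) (Fin m₁) ℝ) (hG : IsUnit (Gᵀ * G))
    (k₁ : Fin m₁ → ℝ) (hk₁ : k₁ = ((Gᵀ * G)⁻¹ * Gᵀ).mulVec (khat - a))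
    (e : EuclideanSpace ℝ (Fin p))
    (he : e = a + (WithLp.equiv 2 (Fin p → ℝ)).symm (G.mulVec k₁) - khat)
    (γ ε β lam μ : ℝ)
    (hγ : 0 < γ) (hε : 0 < ε) (hβ : 0 < β) (hlam : 0 < lam) (hμ : 0 < μ)
    (hparam : lam ≥ γ + ε * μ / (4 * β))
    -- (i) linear output dynamics from the dual relative degree structure
    (hi : ∀ (u₁ : Fin m₁ → ℝ) (u₂ : Fin m₂ → ℝ),
      fderiv ℝ ytil x (f + (WithLp.equiv 2 (Fin n → ℝ)).symm (g₁.mulVec u₁)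
          + (WithLp.equiv 2 (Fin n → ℝ)).symm (g₂.mulVec u₂))
        = (WithLp.equiv 2 (Fin N → ℝ)).symm
            (A.mulVec (ytil x) + B.mulVec (a + (WithLp.equiv 2 (Fin p → ℝ)).symm (G.mulVec u₁))))
    -- the vector `w` whose j-th component is `Dh₀(ỹ(x))` of the j-th column of B
    (w : EuclideanSpace ℝ (Fin p))
    (hw : w = (WithLp.equiv 2 (Fin p → ℝ)).symm
      (fun j => fderiv ℝ h₀ (ytil x) ((WithLp.equiv 2 (Fin N → ℝ)).symm (fun i => B i j))))
    -- (ii) the ISSf-CBF condition for `k̂` on the linear output dynamics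
    (hii : fderiv ℝ h₀ (ytil x)
        ((WithLp.equiv 2 (Fin N → ℝ)).symm (A.mulVec (ytil x) + B.mulVec khat))
      > -γ * h₀ (ytil x) + (1 / ε) * ‖w‖ ^ 2)
    -- (iii) lower bound of the tracking CLF by the squared tracking error
    (hiii : V x ≥ β * ‖e‖ ^ 2)
    -- (iv) exponential decrease of the tracking CLF along the partial closed loop
    (hiv : ∃ u₂ : Fin m₂ → ℝ,
      fderiv ℝ V x (f + (WithLp.equiv 2 (Fin n → ℝ)).symm (g₁.mulVec k₁)
          + (WithLp.equiv 2 (Fin n → ℝ)).symm (g₂.mulVec u₂)) ≤ -lam * V x) :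
    ∃ (u₁ : Fin m₁ → ℝ) (u₂ : Fin m₂ → ℝ),
      fderiv ℝ (h₀ ∘ ytil) x (f + (WithLp.equiv 2 (Fin n → ℝ)).symm (g₁.mulVec u₁)
          + (WithLp.equiv 2 (Fin n → ℝ)).symm (g₂.mulVec u₂))
        - (1 / μ) * fderiv ℝ V x (f + (WithLp.equiv 2 (Fin n → ℝ)).symm (g₁.mulVec u₁)
          + (WithLp.equiv 2 (Fin n → ℝ)).symm (g₂.mulVec u₂))
        > -γ * (h₀ (ytil x) - V x / μ) :=
  stmt_0_general n N p m₁ m₂ x ytil V h₀ hytil hh₀ f g₁ g₂ A B a khat G k₁ e he γ ε β lam μ hε hβ hμ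
    hparam hi w hw hii hiii hiv
end

section
/- Fix dimensions n, m₁, m₂ ≥ 1 and a point x ∈ ℝⁿ. Let H : ℝⁿ → ℝ and V : ℝⁿ → ℝ be differentiable at x, let f ∈ ℝⁿ, g₁ ∈ ℝ^{n×m₁}, g₂ ∈ ℝ^{n×m₂}, and let γ, μ > 0. Set h(x) := H(x) − V(x)/μ. Assume: (i) DH(x)(g₂u₂) = 0 for every u₂ ∈ ℝ^{m₂}; (ii) DV(x)(g₂u₂) = 0 for every u₂ ∈ ℝ^{m₂}; (iii) if DH(x)(g₁u₁) = (1/μ)·DV(x)(g₁u₁) for every u₁ ∈ ℝ^{m₁}, then DH(x)(f) − (1/μ)·DV(x)(f) ≥ −γ·h(x). Then there exist u₁ ∈ ℝ^{m₁} and u₂ ∈ ℝ^{m₂} such that DH(x)(f + g₁u₁ + g₂u₂) − (1/μ)·DV(x)(f + g₁u₁ + g₂u₂) ≥ −γ·h(x). -/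
open Matrix

/-- pointwise content of Corollary 1 (global safety) at points of
the exceptional set where the tracking CLF decrease condition fails. -/
theorem stmt_1 (n m₁ m₂ : ℕ) (hn : 1 ≤ n) (hm₁ : 1 ≤ m₁) (hm₂ : 1 ≤ m₂)
    (x : EuclideanSpace ℝ (Fin n))
    (H V : EuclideanSpace ℝ (Fin n) → ℝ)
    (hH : DifferentiableAt ℝ H x) (hV : DifferentiableAt ℝ V x)
    (f : EuclideanSpace ℝ (Fin n))
    (g₁ : Matrix (Fin n) (Fin m₁) ℝ) (g₂ : Matrix (Fin n) (Fin m₂) ℝ)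
    (γ μ : ℝ) (hγ : 0 < γ) (hμ : 0 < μ)
    (hi : ∀ u₂ : Fin m₂ → ℝ,
      fderiv ℝ H x ((WithLp.equiv 2 (Fin n → ℝ)).symm (g₂.mulVec u₂)) = 0)
    (hii : ∀ u₂ : Fin m₂ → ℝ,
      fderiv ℝ V x ((WithLp.equiv 2 (Fin n → ℝ)).symm (g₂.mulVec u₂)) = 0)
    (hiii : (∀ u₁ : Fin m₁ → ℝ,
        fderiv ℝ H x ((WithLp.equiv 2 (Fin n → ℝ)).symm (g₁.mulVec u₁)) =
          (1 / μ) * fderiv ℝ V x ((WithLp.equiv 2 (Fin n → ℝ)).symm (g₁.mulVec u₁))) →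
      fderiv ℝ H x f - (1 / μ) * fderiv ℝ V x f ≥ -γ * (H x - V x / μ)) :
    ∃ (u₁ : Fin m₁ → ℝ) (u₂ : Fin m₂ → ℝ),
      fderiv ℝ H x (f + (WithLp.equiv 2 (Fin n → ℝ)).symm (g₁.mulVec u₁)
          + (WithLp.equiv 2 (Fin n → ℝ)).symm (g₂.mulVec u₂))
        - (1 / μ) * fderiv ℝ V x (f + (WithLp.equiv 2 (Fin n → ℝ)).symm (g₁.mulVec u₁)
          + (WithLp.equiv 2 (Fin n → ℝ)).symm (g₂.mulVec u₂))
        ≥ -γ * (H x - V x / μ) := by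
  classical
  set a := fderiv ℝ H x with ha
  set b := fderiv ℝ V x with hb
  set e := (WithLp.equiv 2 (Fin n → ℝ)).symm with he
  set F : (Fin m₁ → ℝ) → ℝ := fun u => a (e (g₁.mulVec u)) - (1 / μ) * b (e (g₁.mulVec u))
    with hF
  have hsmul : ∀ (c : ℝ) (u : Fin m₁ → ℝ), F (c • u) = c * F u := by
    intro c u
    have h1 : g₁.mulVec (c • u) = c • g₁.mulVec u := by
      rw [Matrix.mulVec_smul]
    have h2 : e (c • g₁.mulVec u) = c • e (g₁.mulVec u) := rfl
    simp only [hF, h1, h2, a.map_smul, b.map_smul, smul_eq_mul]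
    ring
  by_cases hz : ∀ u : Fin m₁ → ℝ, F u = 0
  · refine ⟨0, 0, ?_⟩
    have h0 : g₁.mulVec (0 : Fin m₁ → ℝ) = 0 := Matrix.mulVec_zero _
    have h0' : g₂.mulVec (0 : Fin m₂ → ℝ) = 0 := Matrix.mulVec_zero _
    have he0 : e (0 : Fin n → ℝ) = 0 := rfl
    have := hiii (by
      intro u
      have := hz u
      simp only [hF] at this
      linarith)
    simpa [h0, h0', he0] using this
  · push_neg at hz
    obtain ⟨u, hu⟩ := hz
    set c : ℝ := (-γ * (H x - V x / μ) - (a f - (1 / μ) * b f)) / F u with hc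
    refine ⟨c • u, 0, ?_⟩
    have h0' : g₂.mulVec (0 : Fin m₂ → ℝ) = 0 := Matrix.mulVec_zero _
    have he0 : e (0 : Fin n → ℝ) = 0 := rfl
    have hadd : ∀ (v w : Fin n → ℝ), e (v + w) = e v + e w := fun _ _ => rfl
    have key : a (f + e (g₁.mulVec (c • u)) + 0) - (1 / μ) * b (f + e (g₁.mulVec (c • u)) + 0)
        = (a f - (1 / μ) * b f) + F (c • u) := by
      simp only [add_zero, map_add, hF]
      ring
    rw [h0', he0, key, hsmul, hc, div_mul_cancel₀ _ hu]
    linarith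
end

section
/- Let Q be a real 3×3 matrix with QᵀQ = I and det Q = 1. Then trace(Q) ≤ 2 + (Q₃₃)², where Q₃₃ is the bottom-right entry of Q. Equivalently, trace(I − Q) ≥ 1 − (Q₃₃)². -/
open Matrix

/-- for `Q ∈ SO(3)`, `trace Q ≤ 2 + Q₃₃²`,
equivalently `trace (1 - Q) ≥ 1 - Q₃₃²`. -/
theorem stmt_7 (Q : Matrix (Fin 3) (Fin 3) ℝ)
    (horth : Qᵀ * Q = 1) (hdet : Q.det = 1) :
    Q.trace ≤ 2 + (Q 2 2) ^ 2 ∧ (1 - Q).trace ≥ 1 - (Q 2 2) ^ 2 := by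
  have hrow : Q * Qᵀ = 1 := mul_eq_one_comm.mp horth
  -- adjugate Q = Qᵀ
  have hadj : Q.adjugate = Qᵀ := by
    have h1 : Q * Q.adjugate = 1 := by
      rw [Matrix.mul_adjugate, hdet, one_smul]
    calc Q.adjugate = 1 * Q.adjugate := (one_mul _).symm
      _ = (Qᵀ * Q) * Q.adjugate := by rw [horth]
      _ = Qᵀ * (Q * Q.adjugate) := by rw [Matrix.mul_assoc]
      _ = Qᵀ := by rw [h1, mul_one]
  -- cofactor identity: Q 2 2 = Q00*Q11 - Q01*Q10
  have hcof : Q 0 0 * Q 1 1 - Q 0 1 * Q 1 0 = Q 2 2 := by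
    have := congrFun (congrFun hadj 2) 2
    rw [Matrix.adjugate_fin_three] at this
    simpa [Matrix.transpose_apply] using this
  -- scalar orthogonality relations
  have hr0 : Q 0 0 ^ 2 + Q 0 1 ^ 2 + Q 0 2 ^ 2 = 1 := by
    have := congrFun (congrFun hrow 0) 0
    simp [Matrix.mul_apply, Fin.sum_univ_three, Matrix.one_apply] at this
    nlinarith [this]
  have hr1 : Q 1 0 ^ 2 + Q 1 1 ^ 2 + Q 1 2 ^ 2 = 1 := by
    have := congrFun (congrFun hrow 1) 1
    simp [Matrix.mul_apply, Fin.sum_univ_three, Matrix.one_apply] at this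
    nlinarith [this]
  have hc2 : Q 0 2 ^ 2 + Q 1 2 ^ 2 + Q 2 2 ^ 2 = 1 := by
    have := congrFun (congrFun horth 2) 2
    simp [Matrix.mul_apply, Fin.sum_univ_three, Matrix.one_apply] at this
    nlinarith [this]
  have htr : Q.trace = Q 0 0 + Q 1 1 + Q 2 2 := by
    simp [Matrix.trace, Fin.sum_univ_three, Matrix.diag]
  have hi2 : Q 2 2 ^ 2 ≤ 1 := by nlinarith [hc2, sq_nonneg (Q 0 2), sq_nonneg (Q 1 2)]
  have hi : -1 ≤ Q 2 2 := by nlinarith [hi2]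
  have h5 : (Q 0 0 + Q 1 1) ^ 2 + (Q 0 1 - Q 1 0) ^ 2 = (1 + Q 2 2) ^ 2 := by
    linear_combination hr0 + hr1 - hc2 + 2 * hcof
  have h6 : Q 0 0 + Q 1 1 ≤ 1 + Q 2 2 := by
    nlinarith [h5, sq_nonneg (Q 0 1 - Q 1 0), hi]
  have key : Q.trace ≤ 2 + (Q 2 2) ^ 2 := by
    rw [htr]
    nlinarith [h6, sq_nonneg (Q 2 2 - 1)]
  refine ⟨key, ?_⟩
  have h7 : (1 - Q).trace = 3 - Q.trace := by
    simp [Matrix.trace_sub, Matrix.trace_one]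
  rw [h7]
  linarith [key, hi2]
end

section
/- Let R and R_d be real 3×3 matrices with RᵀR = I, det R = 1, R_dᵀR_d = I, det R_d = 1. Let k ∈ ℝ³ be a nonzero vector such that R_d·e₃ = k/‖k‖, where e₃ = (0,0,1). Set b := R·e₃ and e_vec := k − ⟨b, k⟩·b. Then (‖k‖²/2)·trace(I − Rᵀ·R_d) ≥ (1/2)·‖e_vec‖², where ⟨·,·⟩ and ‖·‖ are the Euclidean inner product and norm on ℝ³. -/
/-!
With `Q = Rᵀ R_d` orthogonal, `⟪b, k⟫ = ‖k‖ Q₂₂`, so `‖e‖² = ‖k‖² (1 - Q₂₂²)` and the claim reduces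
to `1 - Q₂₂² ≤ tr (1 - Q)`. Since row `i` of `Q` is a unit vector, `2 (1 - Qᵢᵢ) ≥ 1 - Qᵢᵢ² ≥ Qᵢ₂²`
for `i ≠ 2`; summing and using that column 2 is a unit vector gives
`tr (1 - Q) ≥ (1 - Q₂₂) + (1 - Q₂₂²) / 2 ≥ 1 - Q₂₂²`.
-/

open Matrix RealInnerProductSpace

namespace Matrix

section Orthogonal

variable {ι : Type*} [Fintype ι] [DecidableEq ι] {Q : Matrix ι ι ℝ}

theorem sum_sq_row_eq_one (hQ : Q * Qᵀ = 1) (i : ι) : ∑ j, Q i j ^ 2 = 1 := by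
  simpa [mul_apply, sq] using congrFun (congrFun hQ i) i

theorem sum_sq_col_eq_one (hQ : Qᵀ * Q = 1) (j : ι) : ∑ i, Q i j ^ 2 = 1 := by
  simpa [mul_apply, sq] using congrFun (congrFun hQ j) j

theorem sq_le_two_mul_one_sub_diag (hQ : Q * Qᵀ = 1) {i c : ι} (hic : i ≠ c) :
    Q i c ^ 2 ≤ 2 * (1 - Q i i) := by
  have hrow := sum_sq_row_eq_one hQ i
  rw [← Finset.add_sum_erase _ _ (Finset.mem_univ i)] at hrow
  have hc : Q i c ^ 2 ≤ ∑ j ∈ Finset.univ.erase i, Q i j ^ 2 :=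
    Finset.single_le_sum (fun j _ => sq_nonneg (Q i j))
      (Finset.mem_erase.mpr ⟨hic.symm, Finset.mem_univ c⟩)
  nlinarith [sq_nonneg (1 - Q i i)]

theorem one_sub_sq_le_trace_one_sub (hQ : Qᵀ * Q = 1) (c : ι) :
    1 - Q c c ^ 2 ≤ trace (1 - Q) := by
  have hcol := sum_sq_col_eq_one hQ c
  rw [← Finset.add_sum_erase _ _ (Finset.mem_univ c)] at hcol
  have hdiag : ∑ i ∈ Finset.univ.erase c, Q i c ^ 2 / 2 ≤ ∑ i ∈ Finset.univ.erase c, (1 - Q i i) :=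
    Finset.sum_le_sum fun i hi => by
      linarith [sq_le_two_mul_one_sub_diag (mul_eq_one_comm.mp hQ) (Finset.ne_of_mem_erase hi)]
  have htr : trace (1 - Q) = (1 - Q c c) + ∑ i ∈ Finset.univ.erase c, (1 - Q i i) := by
    rw [Finset.add_sum_erase _ (fun i => 1 - Q i i) (Finset.mem_univ c)]
    simp [trace]
  rw [← Finset.sum_div] at hdiag
  nlinarith [sq_nonneg (1 - Q c c)]

end Orthogonal

theorem inner_equiv_symm_col {m n : Type*} [Fintype m] (A B : Matrix m n ℝ) (i j : n) :
    ⟪(WithLp.equiv 2 (m → ℝ)).symm (A.col i), (WithLp.equiv 2 (m → ℝ)).symm (B.col j)⟫ =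
      (Aᵀ * B) i j := by
  simp [PiLp.inner_apply, mul_apply, mul_comm]

theorem mulVec_vec3_zero_zero_one (A : Matrix (Fin 3) (Fin 3) ℝ) : A *ᵥ ![0, 0, 1] = A.col 2 := by
  rw [← mulVec_single_one]
  congr 1
  ext i
  fin_cases i <;> simp

end Matrix

theorem norm_sub_inner_smul_sq {E : Type*} [NormedAddCommGroup E] [InnerProductSpace ℝ E] {b : E}
    (hb : ‖b‖ = 1) (k : E) : ‖k - ⟪b, k⟫ • b‖ ^ 2 = ‖k‖ ^ 2 - ⟪b, k⟫ ^ 2 := by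
  rw [norm_sub_sq_real, norm_smul, real_inner_smul_right, real_inner_comm, hb, Real.norm_eq_abs,
    mul_one, sq_abs]
  ring

theorem stmt_11_general (R Rd : Matrix (Fin 3) (Fin 3) ℝ)
    (hR1 : Rᵀ * R = 1)
    (hRd1 : Rdᵀ * Rd = 1)
    (k : EuclideanSpace ℝ (Fin 3))
    (halign : (WithLp.equiv 2 (Fin 3 → ℝ)).symm (Rd.mulVec ![0, 0, 1]) = ‖k‖⁻¹ • k)
    (b : EuclideanSpace ℝ (Fin 3))
    (hb : b = (WithLp.equiv 2 (Fin 3 → ℝ)).symm (R.mulVec ![0, 0, 1]))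
    (evec : EuclideanSpace ℝ (Fin 3)) (hevec : evec = k - ⟪b, k⟫ • b) :
    (‖k‖ ^ 2 / 2) * (1 - Rᵀ * Rd).trace ≥ (1 / 2) * ‖evec‖ ^ 2 := by
  rw [mulVec_vec3_zero_zero_one] at halign hb
  have hk : k = ‖k‖ • (WithLp.equiv 2 (Fin 3 → ℝ)).symm (Rd.col 2) := by
    rw [halign, smul_smul]
    rcases eq_or_ne ‖k‖ 0 with h | h
    · simp [norm_eq_zero.mp h]
    · rw [mul_inv_cancel₀ h, one_smul]
  have hbk : ⟪b, k⟫ = ‖k‖ * (Rᵀ * Rd) 2 2 := by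
    nth_rw 1 [hk]
    rw [real_inner_smul_right, hb, inner_equiv_symm_col]
  have hb1 : ‖b‖ = 1 := by
    rw [← pow_eq_one_iff_of_nonneg (norm_nonneg b) two_ne_zero, ← real_inner_self_eq_norm_sq, hb,
      inner_equiv_symm_col, hR1, one_apply_eq]
  have hQ : (Rᵀ * Rd)ᵀ * (Rᵀ * Rd) = 1 := by
    rw [transpose_mul, transpose_transpose, Matrix.mul_assoc, ← Matrix.mul_assoc R,
      mul_eq_one_comm.mp hR1, Matrix.one_mul, hRd1]
  rw [hevec, norm_sub_inner_smul_sq hb1, hbk]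
  nlinarith [mul_le_mul_of_nonneg_left (one_sub_sq_le_trace_one_sub hQ 2) (sq_nonneg ‖k‖)]

/-- the appendix Lemma: the geometric tracking Lyapunov function
`(‖k‖²/2)·trace (I − Rᵀ R_d)` is lower bounded by half the squared norm of the
component of `k` orthogonal to the body z-axis `b = R e₃`. -/
theorem stmt_11 (R Rd : Matrix (Fin 3) (Fin 3) ℝ)
    (hR1 : Rᵀ * R = 1) (hR2 : R.det = 1)
    (hRd1 : Rdᵀ * Rd = 1) (hRd2 : Rd.det = 1)
    (k : EuclideanSpace ℝ (Fin 3)) (hk : k ≠ 0)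
    (halign : (WithLp.equiv 2 (Fin 3 → ℝ)).symm (Rd.mulVec ![0, 0, 1]) = ‖k‖⁻¹ • k)
    (b : EuclideanSpace ℝ (Fin 3))
    (hb : b = (WithLp.equiv 2 (Fin 3 → ℝ)).symm (R.mulVec ![0, 0, 1]))
    (evec : EuclideanSpace ℝ (Fin 3)) (hevec : evec = k - ⟪b, k⟫ • b) :
    (‖k‖ ^ 2 / 2) * (1 - Rᵀ * Rd).trace ≥ (1 / 2) * ‖evec‖ ^ 2 :=
  stmt_11_general R Rd hR1 hRd1 k halign b hb evec hevec
end
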